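/- Under the assumptions that 0 < α < β, y₀ = ε ∈ (0, γ), x₀ = 1 - ε, and 1 + (α/β)ln(α/(β(1-ε))) - α/β > γ, the minimal value of G over D_γ equals (α/(βγ))·(ln(α/β) - 1 + β/α - ln(x₀)) - 1, and this value is positive and strictly decreasing in γ. -/

import Mathlib

/-!
Write `c = α/β`, `ν_F = γ⁻¹ (1 - c/x) e^{-F}` and `φ(x) = x - c log x` (`phi` below).
Since `0 < e^F ≤ 1`, `(f + ν_F)₊ ≥ (f + ν_F) e^F = (e^F)' + γ⁻¹ (1 - c/x)`, so by the
chain rule for the absolutely continuous primitive `F`, every admissible `f` has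
`G f ≥ e^{F(x₀)} - 1 + γ⁻¹ (φ(x₀) - φ(c)) = ε/γ - 1 + γ⁻¹ (φ(x₀) - φ(c))`.
The bound is attained by `f = 0` on `[c, x*]` (where `F = 0`, so the inequality is an
equality) and `f = -ν_F` on `(x*, x₀]` (where both sides vanish). This forces
`e^F = 1 - γ⁻¹ (φ(x) - φ(x*))` there, and the terminal condition `e^{F(x₀)} = ε/γ` becomes
the paper's equation `φ(x*) = 1 - γ - c log x₀`, solvable in `[c, x₀]` by the intermediate
value theorem under the stated assumptions.
-/

open Set MeasureTheory Filter Topology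

theorem LipschitzOnWith.comp_absolutelyContinuousOnInterval {f g : ℝ → ℝ} {a b : ℝ}
    {t : Set ℝ} {K : NNReal} (hg : LipschitzOnWith K g t)
    (hf : AbsolutelyContinuousOnInterval f a b) (hft : MapsTo f (uIcc a b) t) :
    AbsolutelyContinuousOnInterval (g ∘ f) a b := by
  refine squeeze_zero' (Eventually.of_forall fun _ => Finset.sum_nonneg fun _ _ => dist_nonneg)
    ?_ (by simpa using Tendsto.const_mul (K : ℝ) hf)
  filter_upwards [mem_inf_of_right (mem_principal_self _)] with E hE
  rw [Finset.mul_sum]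
  exact Finset.sum_le_sum fun i hi =>
    hg.dist_le_mul _ (hft (hE.1 i hi).1) _ (hft (hE.1 i hi).2)

theorem ContDiff.comp_absolutelyContinuousOnInterval {f g : ℝ → ℝ} {a b : ℝ}
    (hg : ContDiff ℝ 1 g) (hf : AbsolutelyContinuousOnInterval f a b) :
    AbsolutelyContinuousOnInterval (g ∘ f) a b := by
  obtain ⟨C, hC⟩ := hf.exists_bound
  obtain ⟨K, hK⟩ := hg.contDiffOn.exists_lipschitzOnWith (s := Metric.closedBall 0 C)
    one_ne_zero (convex_closedBall 0 C) (isCompact_closedBall 0 C)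
  exact hK.comp_absolutelyContinuousOnInterval hf fun x hx => mem_closedBall_zero_iff.2 (hC x hx)

theorem integral_deriv_comp_primitive_mul {f g : ℝ → ℝ} {a b : ℝ} (hg : ContDiff ℝ 1 g)
    (hf : IntervalIntegrable f volume a b) :
    ∫ x in a..b, deriv g (∫ t in a..x, f t) * f x = g (∫ t in a..b, f t) - g 0 := by
  have hF := hf.absolutelyContinuousOnInterval_intervalIntegral (c := a) left_mem_uIcc
  have hFTC := (hg.comp_absolutelyContinuousOnInterval hF).integral_deriv_eq_sub
  simp only [Function.comp_apply, intervalIntegral.integral_same] at hFTC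
  rw [← hFTC]
  refine intervalIntegral.integral_congr_ae ?_
  filter_upwards [hf.ae_hasDerivAt_integral] with x hx hxab
  exact (((hg.differentiable one_ne_zero _).hasDerivAt.comp x
    (hx (uIoc_subset_uIcc hxab) a left_mem_uIcc)).deriv).symm

theorem integral_mul_exp_primitive {f : ℝ → ℝ} {a b : ℝ}
    (hf : IntervalIntegrable f volume a b) :
    ∫ x in a..b, f x * Real.exp (∫ t in a..x, f t) = Real.exp (∫ t in a..b, f t) - 1 := by
  simpa [mul_comm] using integral_deriv_comp_primitive_mul Real.contDiff_exp hf

theorem mul_le_max_zero {A e : ℝ} (he₀ : 0 ≤ e) (he₁ : e ≤ 1) : A * e ≤ max A 0 := by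
  rcases le_total A 0 with hA | hA
  · exact (mul_nonpos_of_nonpos_of_nonneg hA he₀).trans (le_max_right _ _)
  · exact (mul_le_of_le_one_right hA he₁).trans (le_max_left _ _)

noncomputable section

def phi (c y : ℝ) : ℝ := y - c * Real.log y

theorem hasDerivAt_phi (c : ℝ) {x : ℝ} (hx : 0 < x) : HasDerivAt (phi c) (1 - c / x) x :=
  ((hasDerivAt_id' x).sub ((Real.hasDerivAt_log hx.ne').const_mul c)).congr_deriv
    (by rw [div_eq_mul_inv])

theorem monotoneOn_phi {c : ℝ} (hc : 0 < c) : MonotoneOn (phi c) (Ici c) := by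
  refine monotoneOn_of_deriv_nonneg (convex_Ici c)
    (fun x hx => (hasDerivAt_phi c (hc.trans_le hx)).continuousAt.continuousWithinAt)
    (fun x hx => ?_) (fun x hx => ?_) <;> rw [interior_Ici] at hx
  · exact (hasDerivAt_phi c (hc.trans hx)).differentiableAt.differentiableWithinAt
  · rw [(hasDerivAt_phi c (hc.trans hx)).deriv, sub_nonneg]
    exact div_le_one_of_le₀ hx.le (hc.trans hx).le

theorem integral_one_sub_div (c : ℝ) {p q : ℝ} (hp : 0 < p) (hq : 0 < q) :
    ∫ x in p..q, (1 - c / x) = phi c q - phi c p := by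
  have hpos : ∀ x ∈ uIcc p q, 0 < x := fun x hx => (lt_min hp hq).trans_le hx.1
  refine intervalIntegral.integral_eq_sub_of_hasDerivAt
    (fun x hx => hasDerivAt_phi c (hpos x hx)) (ContinuousOn.intervalIntegrable ?_)
  exact continuousOn_const.sub (continuousOn_const.div continuousOn_id fun x hx => (hpos x hx).ne')

/-- The integrand `(f + ν_F)₊` of `G`, with `c = α/β` and `F` the primitive of `f` from `c`. -/
def costDensity (c γ : ℝ) (f : ℝ → ℝ) (x : ℝ) : ℝ :=
  max (f x + γ⁻¹ * (1 - c / x) * Real.exp (-∫ u in c..x, f u)) 0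

theorem le_integral_costDensity {c γ b : ℝ} {f : ℝ → ℝ} (hc : 0 < c) (hcb : c ≤ b)
    (hf : IntervalIntegrable f volume c b) (hF : ∀ x ∈ Icc c b, ∫ u in c..x, f u ≤ 0) :
    Real.exp (∫ u in c..b, f u) - 1 + γ⁻¹ * (phi c b - phi c c) ≤
      ∫ x in c..b, costDensity c γ f x := by
  have hFc : ContinuousOn (fun x => ∫ u in c..x, f u) (uIcc c b) :=
    (hf.absolutelyContinuousOnInterval_intervalIntegral left_mem_uIcc).continuousOn
  rw [uIcc_of_le hcb] at hFc
  have hexpF : ContinuousOn (fun x => Real.exp (∫ u in c..x, f u)) (Icc c b) :=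
    Real.continuous_exp.comp_continuousOn hFc
  have hν : ContinuousOn (fun x => γ⁻¹ * (1 - c / x)) (Icc c b) :=
    continuousOn_const.mul (continuousOn_const.sub (continuousOn_const.div continuousOn_id
      fun x hx => (hc.trans_le hx.1).ne'))
  have hfexp := hf.mul_continuousOn (uIcc_of_le hcb ▸ hexpF)
  have hνi := hν.intervalIntegrable_of_Icc (μ := volume) hcb
  have hcost : IntervalIntegrable (costDensity c γ f) volume c b := by
    have hsum := hf.add ((hν.mul (Real.continuous_exp.comp_continuousOn hFc.neg))
      |>.intervalIntegrable_of_Icc (μ := volume) hcb)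
    exact ⟨hsum.1.pos_part, hsum.2.pos_part⟩
  calc Real.exp (∫ u in c..b, f u) - 1 + γ⁻¹ * (phi c b - phi c c)
      = ∫ x in c..b, (f x * Real.exp (∫ u in c..x, f u) + γ⁻¹ * (1 - c / x)) := by
        rw [intervalIntegral.integral_add hfexp hνi, integral_mul_exp_primitive hf,
          intervalIntegral.integral_const_mul, integral_one_sub_div c hc (hc.trans_le hcb)]
    _ ≤ ∫ x in c..b, costDensity c γ f x := by
        refine intervalIntegral.integral_mono_on hcb (hfexp.add hνi) hcost fun x hx => ?_
        have hexp := Real.exp_pos (∫ u in c..x, f u)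
        convert mul_le_max_zero (A := f x + γ⁻¹ * (1 - c / x) * Real.exp (-∫ u in c..x, f u))
          hexp.le (Real.exp_le_one_iff.2 (hF x hx)) using 1
        · rw [Real.exp_neg]
          field_simp
        · rfl

section Optimal

variable {c γ xs b x : ℝ}

/-- On `(xs, ∞)` the optimal control makes the integrand of `G` vanish, i.e. `f + ν_F = 0`, which
reads `(exp F)' = -γ⁻¹ (1 - c / x)`; with `F xs = 0` this gives `exp F = optimalWeight`.
The switching point `xs` is the paper's `x*`. -/
def optimalWeight (c γ xs x : ℝ) : ℝ := 1 - γ⁻¹ * (phi c x - phi c xs)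

def optimalRate (c γ xs x : ℝ) : ℝ := -(γ⁻¹ * (1 - c / x)) / optimalWeight c γ xs x

def optimalControl (c γ xs : ℝ) : ℝ → ℝ := (Ioi xs).indicator (optimalRate c γ xs)

@[simp]
theorem optimalWeight_self : optimalWeight c γ xs xs = 1 := by
  simp [optimalWeight]

theorem hasDerivAt_optimalWeight (hx : 0 < x) :
    HasDerivAt (optimalWeight c γ xs) (-(γ⁻¹ * (1 - c / x))) x :=
  (((hasDerivAt_phi c hx).sub_const (phi c xs)).const_mul γ⁻¹).const_sub 1

theorem continuousOn_optimalRate (hc : 0 < c) (hW : ∀ x ∈ Icc xs b, 0 < optimalWeight c γ xs x)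
    (hcxs : c ≤ xs) : ContinuousOn (optimalRate c γ xs) (Icc xs b) := fun x hx =>
  have hx₀ : 0 < x := hc.trans_le (hcxs.trans hx.1)
  ((continuousAt_const.mul (continuousAt_const.sub (continuousAt_const.div continuousAt_id
    hx₀.ne'))).neg.div (hasDerivAt_optimalWeight hx₀).continuousAt
    (hW x hx).ne').continuousWithinAt

theorem optimalWeight_mem_Ioc (hc : 0 < c) (hγ : 0 ≤ γ) (hcxs : c ≤ xs)
    (hWb : 0 < optimalWeight c γ xs b) (hx : x ∈ Icc xs b) :
    optimalWeight c γ xs x ∈ Ioc 0 1 := by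
  have hxs : xs ∈ Ici c := hcxs
  have hle₁ := monotoneOn_phi hc hxs (hcxs.trans hx.1) hx.1
  have hle₂ := monotoneOn_phi hc (hcxs.trans hx.1 : c ≤ x) (hcxs.trans (hx.1.trans hx.2)) hx.2
  have hγ' : 0 ≤ γ⁻¹ := inv_nonneg.2 hγ
  unfold optimalWeight at hWb ⊢
  exact ⟨by nlinarith, by nlinarith⟩

theorem optimalControl_of_le (hx : x ≤ xs) : optimalControl c γ xs x = 0 :=
  indicator_of_notMem (not_lt.2 hx) _

theorem optimalControl_of_lt (hx : xs < x) : optimalControl c γ xs x = optimalRate c γ xs x :=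
  indicator_of_mem hx _

theorem integral_optimalControl_of_le {p q : ℝ} (hp : p ≤ xs) (hq : q ≤ xs) :
    ∫ u in p..q, optimalControl c γ xs u = 0 := by
  rw [intervalIntegral.integral_congr (g := 0) fun u hu =>
    optimalControl_of_le (hu.2.trans (max_le hp hq))]
  exact intervalIntegral.integral_zero

theorem intervalIntegrable_optimalControl (hc : 0 < c) (hγ : 0 ≤ γ) (hcxs : c ≤ xs)
    (hxsb : xs ≤ b) (hWb : 0 < optimalWeight c γ xs b) :
    IntervalIntegrable (optimalControl c γ xs) volume c b := by
  rw [intervalIntegrable_iff_integrableOn_Icc_of_le (hcxs.trans hxsb), optimalControl,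
    integrableOn_indicator_iff measurableSet_Ioi]
  exact (continuousOn_optimalRate hc (fun x hx => (optimalWeight_mem_Ioc hc hγ hcxs hWb hx).1)
    hcxs).integrableOn_Icc.mono_set fun u hu => ⟨le_of_lt hu.1, hu.2.2⟩

theorem integral_optimalControl (hc : 0 < c) (hγ : 0 ≤ γ) (hcxs : c ≤ xs)
    (hWb : 0 < optimalWeight c γ xs b) (hx : x ∈ Icc c b) :
    ∫ u in c..x, optimalControl c γ xs u = Real.log (optimalWeight c γ xs (max x xs)) := by
  rcases le_or_gt x xs with hle | hlt
  · rw [max_eq_right hle, integral_optimalControl_of_le hcxs hle, optimalWeight_self, Real.log_one]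
  have hW : ∀ y ∈ Icc xs x, 0 < optimalWeight c γ xs y := fun y hy =>
    (optimalWeight_mem_Ioc hc hγ hcxs hWb ⟨hy.1, hy.2.trans hx.2⟩).1
  have hint := intervalIntegrable_optimalControl hc hγ hcxs (hlt.le.trans hx.2) hWb
  rw [max_eq_left hlt.le, ← intervalIntegral.integral_add_adjacent_intervals
    (hint.mono_set ?_) (hint.mono_set ?_), integral_optimalControl_of_le hcxs le_rfl, zero_add]
  calc ∫ u in xs..x, optimalControl c γ xs u
      = ∫ u in xs..x, optimalRate c γ xs u :=
        intervalIntegral.integral_congr_ae (Eventually.of_forall fun u hu =>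
          optimalControl_of_lt (uIoc_of_le hlt.le ▸ hu).1)
    _ = Real.log (optimalWeight c γ xs x) - Real.log (optimalWeight c γ xs xs) := by
        refine intervalIntegral.integral_eq_sub_of_hasDerivAt
          (f := fun y => Real.log (optimalWeight c γ xs y)) (fun y hy => ?_)
          ((continuousOn_optimalRate hc hW hcxs).intervalIntegrable_of_Icc hlt.le)
        rw [uIcc_of_le hlt.le] at hy
        exact (hasDerivAt_optimalWeight (hc.trans_le (hcxs.trans hy.1))).log (hW y hy).ne'
    _ = Real.log (optimalWeight c γ xs x) := by simp
  · exact uIcc_subset_uIcc left_mem_uIcc (mem_uIcc_of_le hcxs (hlt.le.trans hx.2))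
  · exact uIcc_subset_uIcc (mem_uIcc_of_le hcxs (hlt.le.trans hx.2)) (mem_uIcc_of_le hx.1 hx.2)

theorem integral_optimalControl_nonpos (hc : 0 < c) (hγ : 0 ≤ γ) (hcxs : c ≤ xs)
    (hWb : 0 < optimalWeight c γ xs b) (hx : x ∈ Icc c b) :
    ∫ u in c..x, optimalControl c γ xs u ≤ 0 := by
  rw [integral_optimalControl hc hγ hcxs hWb hx]
  rcases le_or_gt x xs with hle | hlt
  · simp [max_eq_right hle]
  · have hW := optimalWeight_mem_Ioc hc hγ hcxs hWb ⟨hlt.le, hx.2⟩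
    rw [max_eq_left hlt.le]
    exact Real.log_nonpos hW.1.le hW.2

theorem costDensity_optimalControl (hc : 0 < c) (hγ : 0 ≤ γ) (hcxs : c ≤ xs)
    (hWb : 0 < optimalWeight c γ xs b) (hx : x ∈ Icc c b) :
    costDensity c γ (optimalControl c γ xs) x =
      {y | y ≤ xs}.indicator (fun y => γ⁻¹ * (1 - c / y)) x := by
  rw [costDensity, integral_optimalControl hc hγ hcxs hWb hx]
  rcases le_or_gt x xs with hle | hlt
  · rw [optimalControl_of_le hle, max_eq_right hle, optimalWeight_self, Real.log_one, neg_zero,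
      Real.exp_zero, mul_one, zero_add, indicator_of_mem (show x ∈ {y | y ≤ xs} from hle)]
    exact max_eq_left (mul_nonneg (inv_nonneg.2 hγ)
      (sub_nonneg.2 (div_le_one_of_le₀ hx.1 (hc.trans_le hx.1).le)))
  · have hW := optimalWeight_mem_Ioc hc hγ hcxs hWb ⟨hlt.le, hx.2⟩
    rw [optimalControl_of_lt hlt, max_eq_left hlt.le, Real.exp_neg, Real.exp_log hW.1,
      indicator_of_notMem (show x ∉ {y | y ≤ xs} from not_le.2 hlt), optimalRate]
    simp [div_eq_mul_inv]

theorem integral_costDensity_optimalControl (hc : 0 < c) (hγ : 0 ≤ γ) (hcxs : c ≤ xs)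
    (hxsb : xs ≤ b) (hWb : 0 < optimalWeight c γ xs b) :
    ∫ x in c..b, costDensity c γ (optimalControl c γ xs) x =
      γ⁻¹ * (phi c xs - phi c c) := by
  rw [intervalIntegral.integral_congr fun x hx => costDensity_optimalControl hc hγ hcxs hWb
      (uIcc_of_le (hcxs.trans hxsb) ▸ hx), intervalIntegral.integral_indicator ⟨hcxs, hxsb⟩,
    intervalIntegral.integral_const_mul, integral_one_sub_div c hc (hc.trans_le hcxs)]

theorem optimalControl_add_inv_mul_exp_nonneg (hc : 0 < c) (hγ : 0 ≤ γ) (hcxs : c ≤ xs)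
    (hWb : 0 < optimalWeight c γ xs b) (hx : x ∈ Icc c b) :
    0 ≤ optimalControl c γ xs x +
      γ⁻¹ * Real.exp (-∫ u in c..x, optimalControl c γ xs u) := by
  rw [integral_optimalControl hc hγ hcxs hWb hx]
  rcases le_or_gt x xs with hle | hlt
  · rw [optimalControl_of_le hle, max_eq_right hle, optimalWeight_self]
    simpa using hγ
  · have hW := optimalWeight_mem_Ioc hc hγ hcxs hWb ⟨hlt.le, hx.2⟩
    have hx₀ : 0 < x := hc.trans (hcxs.trans_lt hlt)
    have hsum : optimalRate c γ xs x + γ⁻¹ * (optimalWeight c γ xs x)⁻¹ =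
        γ⁻¹ * (c / x) / optimalWeight c γ xs x := by
      unfold optimalRate
      field_simp
      ring
    rw [optimalControl_of_lt hlt, max_eq_left hlt.le, Real.exp_neg, Real.exp_log hW.1, hsum]
    exact div_nonneg (mul_nonneg (inv_nonneg.2 hγ) (div_nonneg hc.le hx₀.le)) hW.1.le

end Optimal

end

theorem exists_optimalControl {c γ b T : ℝ} (hc : 0 < c) (hγ : 0 < γ) (hcb : c ≤ b)
    (hT : T ∈ Icc (phi c c) (phi c b)) (hTγ : phi c b - T < γ) :
    ∃ f : ℝ → ℝ, IntervalIntegrable f volume c b ∧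
      ∫ u in c..b, f u = Real.log (1 - γ⁻¹ * (phi c b - T)) ∧
      (∀ x ∈ Icc c b,
        ∫ u in c..x, f u ≤ 0 ∧ 0 ≤ f x + γ⁻¹ * Real.exp (-∫ u in c..x, f u)) ∧
      ∫ x in c..b, costDensity c γ f x = γ⁻¹ * (T - phi c c) := by
  obtain ⟨xs, ⟨hcxs, hxsb⟩, hxs⟩ := intermediate_value_Icc hcb
    (fun x hx => (hasDerivAt_phi c (hc.trans_le hx.1)).continuousAt.continuousWithinAt) hT
  have hWb : optimalWeight c γ xs b = 1 - γ⁻¹ * (phi c b - T) := by rw [optimalWeight, hxs]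
  have hWpos : 0 < optimalWeight c γ xs b := by
    rw [hWb, sub_pos, inv_mul_lt_iff₀ hγ, mul_one]
    exact hTγ
  refine ⟨optimalControl c γ xs, intervalIntegrable_optimalControl hc hγ.le hcxs hxsb hWpos, ?_,
    fun x hx => ⟨integral_optimalControl_nonpos hc hγ.le hcxs hWpos hx,
      optimalControl_add_inv_mul_exp_nonneg hc hγ.le hcxs hWpos hx⟩, ?_⟩
  · rw [integral_optimalControl hc hγ.le hcxs hWpos ⟨hcb, le_rfl⟩, max_eq_left hxsb, hWb]
  · rw [integral_costDensity_optimalControl hc hγ.le hcxs hxsb hWpos, hxs]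

theorem isLeast_integral_costDensity {c γ ε : ℝ} (hc : 0 < c) (hε : 0 < ε) (hεγ : ε < γ)
    (hcb : c ≤ 1 - ε) (hpeak : phi c c < 1 - γ - c * Real.log (1 - ε)) :
    IsLeast {v | ∃ f : ℝ → ℝ, (IntegrableOn f (Icc c (1 - ε)) ∧
        ∫ u in c..1 - ε, f u = Real.log (ε / γ) ∧
        (∀ x ∈ Icc c (1 - ε), ∫ u in c..x, f u ≤ 0) ∧
        ∀ᵐ x ∂volume.restrict (Icc c (1 - ε)),
          0 ≤ f x + γ⁻¹ * Real.exp (-∫ u in c..x, f u)) ∧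
        ∫ x in c..1 - ε, costDensity c γ f x = v}
      (γ⁻¹ * (1 - γ - c * Real.log (1 - ε) - phi c c)) := by
  have hγ : 0 < γ := hε.trans hεγ
  have hφ : phi c (1 - ε) - (1 - γ - c * Real.log (1 - ε)) = γ - ε := by rw [phi]; ring
  constructor
  · obtain ⟨f, hf, hfb, hfx, hcost⟩ :=
      exists_optimalControl hc hγ hcb ⟨hpeak.le, by linarith⟩ (by linarith)
    refine ⟨f, ⟨(intervalIntegrable_iff_integrableOn_Icc_of_le hcb).1 hf, ?_,
      fun x hx => (hfx x hx).1,
      ae_restrict_of_forall_mem measurableSet_Icc fun x hx => (hfx x hx).2⟩, hcost⟩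
    rw [hfb, hφ]
    field_simp
    ring_nf
  · rintro _ ⟨f, ⟨hf, hfb, hfx, -⟩, rfl⟩
    have hlow := le_integral_costDensity (γ := γ) hc hcb
      ((intervalIntegrable_iff_integrableOn_Icc_of_le hcb).2 hf) hfx
    rw [hfb, Real.exp_log (div_pos hε hγ)] at hlow
    convert hlow using 1
    rw [phi, phi]
    field_simp
    ring

/-- Minimal value of the phase-space cost: under the underlying assumption,
`min_{D_γ} G = (α/(βγ))(log (α/β) - 1 + β/α - log x₀) - 1`; this value is
positive and is strictly decreasing as a function of `γ` on the range where
the underlying assumption holds. -/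
theorem minimal_cost_value
    (α β γ ε y₀ x₀ : ℝ) (hα : 0 < α) (hαβ : α < β)
    (hε : ε ∈ Ioo (0:ℝ) 1) (hx₀ : x₀ = 1 - ε) (hy₀ : y₀ = ε)
    (hγ : 0 < γ) (hεγ : ε < γ) (hxb : α / β < x₀)
    (hpeak : γ < 1 + (α / β) * Real.log (α / (β * (1 - ε))) - α / β)
    (F : (ℝ → ℝ) → ℝ → ℝ)
    (hF : ∀ f x, F f x = ∫ u in (α / β)..x, f u)
    (G : (ℝ → ℝ) → ℝ)
    (hG : ∀ f, G f = ∫ x in Icc (α / β) x₀,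
        max (f x + γ⁻¹ * (1 - α / (β * x)) * Real.exp (-(F f x))) 0)
    (D : (ℝ → ℝ) → Prop)
    (hD : ∀ f, D f ↔ (IntegrableOn f (Icc (α / β) x₀) ∧
        F f x₀ = Real.log (y₀ / γ) ∧
        (∀ x ∈ Icc (α / β) x₀, F f x ≤ 0) ∧
        (∀ᵐ x ∂(volume.restrict (Icc (α / β) x₀)),
          0 ≤ f x + γ⁻¹ * Real.exp (-(F f x))))) :
    IsLeast {c : ℝ | ∃ f, D f ∧ G f = c}
      ((α / (β * γ)) * (Real.log (α / β) - 1 + β / α - Real.log x₀) - 1) ∧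
    0 < (α / (β * γ)) * (Real.log (α / β) - 1 + β / α - Real.log x₀) - 1 ∧
    StrictAntiOn
      (fun g : ℝ =>
        (α / (β * g)) * (Real.log (α / β) - 1 + β / α - Real.log x₀) - 1)
      {g : ℝ | 0 < g ∧
        g < 1 + (α / β) * Real.log (α / (β * (1 - ε))) - α / β} := by
  subst hx₀
  have hβ : 0 < β := hα.trans hαβ
  have hc : 0 < α / β := div_pos hα hβ
  have hG' : ∀ f, G f = ∫ x in (α / β)..(1 - ε), costDensity (α / β) γ f x := fun f => by
    rw [hG, integral_Icc_eq_integral_Ioc, ← intervalIntegral.integral_of_le hxb.le]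
    simp only [costDensity, hF, div_div]
  have hM : (α / (β * γ)) * (Real.log (α / β) - 1 + β / α - Real.log (1 - ε)) - 1 =
      γ⁻¹ * (1 - γ - α / β * Real.log (1 - ε) - phi (α / β) (α / β)) := by
    rw [phi]
    field_simp
    ring
  have hpeak' : phi (α / β) (α / β) < 1 - γ - α / β * Real.log (1 - ε) := by
    rw [← div_div, Real.log_div hc.ne' (hc.trans hxb).ne'] at hpeak
    rw [phi]
    linarith
  have hMpos : 0 < (α / (β * γ)) * (Real.log (α / β) - 1 + β / α - Real.log (1 - ε)) - 1 :=
    hM ▸ mul_pos (inv_pos.2 hγ) (sub_pos.2 hpeak')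
  refine ⟨?_, hMpos, fun g₁ h₁ g₂ _ hlt => ?_⟩
  · rw [hM]
    simpa only [hD, hG', hF, hy₀] using
      isLeast_integral_costDensity hc hε.1 hεγ hxb.le hpeak'
  · have hK := pos_of_mul_pos_right (one_pos.trans (sub_pos.1 hMpos))
      (div_pos hα (mul_pos hβ hγ)).le
    dsimp only
    gcongr
    exact mul_pos hβ h₁.1
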